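/- arXiv:2202.08339 — 12 statements merged into one kernel-verified Lean document; each statement's English description precedes it below -/
import Mathlib

section
/- Let R be an arithmetical ring and I a proper ideal of R. Then I is weakly prime if and only if I = I·R_p ∩ R for some prime ideal p of R. Moreover, if I is weakly prime, then I = I·R_p ∩ R for every prime ideal p of R with I^# ⊆ p. -/
/-- An arithmetical ring: localizations at maximal ideals have totally ordered ideal lattices. -/
def IsArithmetical (R : Type*) [CommRing R] : Prop :=
  ∀ (m : Ideal R) [m.IsMaximal],
    ∀ I J : Ideal (Localization.AtPrime m), I ≤ J ∨ J ≤ I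

/-- A weakly prime ideal: a proper ideal such that for all finitely generated ideals `A, B`,
`A ⊓ B ≤ I` implies `A ≤ I` or `B ≤ I`. -/
def IsWeaklyPrime {R : Type*} [CommRing R] (I : Ideal R) : Prop :=
  I ≠ ⊤ ∧ ∀ A B : Ideal R, A.FG → B.FG → A ⊓ B ≤ I → A ≤ I ∨ B ≤ I

/-- `I·R_p ∩ R`: the preimage under the localization map `R → R_p` of the ideal of `R_p`
generated by the image of `I`. -/
def locContract {R : Type*} [CommRing R] (I p : Ideal R) (hp : p.IsPrime) : Ideal R :=
  haveI := hp
  (I.map (algebraMap R (Localization.AtPrime p))).comap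
    (algebraMap R (Localization.AtPrime p))

/-!
Localizations of an arithmetical ring at primes still have totally ordered ideals, so if
`I = I·R_p ∩ R`, comparing `A·R_p` with `B·R_p` shows `I` weakly prime. Conversely, for weakly
prime `I` the zero divisors modulo `I` form a prime ideal `I^#`, and `I = I·R_p ∩ R` whenever no
element outside `p` is a zero divisor modulo `I`.
-/

open IsLocalization

theorem PreValuationRing.of_isLocalization {A B : Type*} [CommRing A] [CommRing B] [Algebra A B]
    (M : Submonoid A) [IsLocalization M B] [PreValuationRing A] : PreValuationRing B := by
  have hA := PreValuationRing.iff_ideal_total.mp ‹PreValuationRing A›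
  exact PreValuationRing.iff_ideal_total.mpr ⟨fun J K =>
    (hA.total (J.under A) (K.under A)).imp (under_le_under_iff M B).mp (under_le_under_iff M B).mp⟩

section

variable {R : Type*} [CommRing R]

/-- `R_p` is a localization of `R_m` for any maximal ideal `m ⊇ p`. -/
theorem IsArithmetical.preValuationRing_atPrime (hR : IsArithmetical R) (p : Ideal R)
    [hp : p.IsPrime] : PreValuationRing (Localization.AtPrime p) := by
  obtain ⟨m, _, hpm⟩ := p.exists_le_maximal hp.ne_top
  have : PreValuationRing (Localization.AtPrime m) := PreValuationRing.iff_ideal_total.mpr ⟨hR m⟩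
  have hle : m.primeCompl ≤ p.primeCompl := fun x hxm hxp => hxm (hpm hxp)
  let := localizationAlgebraOfSubmonoidLe (Localization.AtPrime m) (Localization.AtPrime p) _ _ hle
  have := localization_isScalarTower_of_submonoid_le
    (Localization.AtPrime m) (Localization.AtPrime p) _ _ hle
  have := isLocalization_of_submonoid_le (Localization.AtPrime m) (Localization.AtPrime p) _ _ hle
  exact PreValuationRing.of_isLocalization (p.primeCompl.map (algebraMap R (Localization.AtPrime m)))

theorem mem_locContract_iff {I p : Ideal R} (hp : p.IsPrime) {a : R} :
    a ∈ locContract I p hp ↔ ∃ s ∉ p, s * a ∈ I :=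
  algebraMap_mem_map_algebraMap_iff (S := Localization.AtPrime p) p.primeCompl I a

theorem IsWeaklyPrime.of_eq_locContract {I : Ideal R} (p : Ideal R) [hp : p.IsPrime]
    [PreValuationRing (Localization.AtPrime p)] (hI : I ≠ ⊤) (hEq : I = locContract I p hp) :
    IsWeaklyPrime I := by
  have le_of_map_le : ∀ A B : Ideal R, A.map (algebraMap R (Localization.AtPrime p)) ≤
      B.map (algebraMap R (Localization.AtPrime p)) → A ⊓ B ≤ I → A ≤ I := by
    intro A B hAB hABI a ha
    obtain ⟨s, hs, hsa⟩ := (mem_locContract_iff (I := B) hp).mp (hAB (Ideal.mem_map_of_mem _ ha))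
    rw [hEq]
    exact (mem_locContract_iff hp).mpr ⟨s, hs, hABI ⟨A.mul_mem_left s ha, hsa⟩⟩
  refine ⟨hI, fun A B _ _ hAB => ?_⟩
  rcases (PreValuationRing.iff_ideal_total.mp ‹_›).total
      (A.map (algebraMap R (Localization.AtPrime p))) (B.map (algebraMap R _)) with h | h
  · exact .inl (le_of_map_le A B h hAB)
  · exact .inr (le_of_map_le B A h (inf_comm A B ▸ hAB))

/-- The paper's `I^#`, the set of zero divisors modulo `I`. -/
def Ideal.sharpSet (I : Ideal R) : Set R := {a | ∃ r ∉ I, a * r ∈ I}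

theorem eq_locContract_of_sharpSet_subset {I p : Ideal R} (hp : p.IsPrime)
    (h : I.sharpSet ⊆ p) : I = locContract I p hp := by
  refine le_antisymm Ideal.le_comap_map fun a ha => ?_
  obtain ⟨s, hs, hsa⟩ := (mem_locContract_iff hp).mp ha
  by_contra haI
  exact hs (h ⟨a, haI, hsa⟩)

/-- Closure under addition: if `a r, b t ∈ I` with `r, t ∉ I`, weak primality provides a common
multiple `x ∉ I` of `r` and `t`, and `(a + b) x ∈ I`. -/
def IsWeaklyPrime.sharp {I : Ideal R} (hI : IsWeaklyPrime I) : Ideal R where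
  carrier := I.sharpSet
  zero_mem' := ⟨1, (Ideal.ne_top_iff_one I).mp hI.1, by simp⟩
  add_mem' := by
    rintro a b ⟨r, hr, har⟩ ⟨t, ht, hbt⟩
    obtain ⟨x, ⟨hxr, hxt⟩, hxI⟩ :=
      SetLike.not_le_iff_exists.mp fun h : Ideal.span {r} ⊓ Ideal.span {t} ≤ I =>
        (hI.2 _ _ (Submodule.fg_span_singleton r) (Submodule.fg_span_singleton t) h).elim
          (fun h => hr (h (Ideal.mem_span_singleton_self r)))
          (fun h => ht (h (Ideal.mem_span_singleton_self t)))
    obtain ⟨α, rfl⟩ := Ideal.mem_span_singleton'.mp hxr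
    obtain ⟨β, hβ⟩ := Ideal.mem_span_singleton'.mp hxt
    refine ⟨α * r, hxI, ?_⟩
    have : (a + b) * (α * r) = α * (a * r) + β * (b * t) := by
      linear_combination (-b) * hβ
    rw [this]
    exact I.add_mem (I.mul_mem_left α har) (I.mul_mem_left β hbt)
  smul_mem' := by
    rintro c a ⟨r, hr, har⟩
    exact ⟨r, hr, by simpa only [smul_eq_mul, mul_assoc] using I.mul_mem_left c har⟩

theorem IsWeaklyPrime.sharp_isPrime {I : Ideal R} (hI : IsWeaklyPrime I) : hI.sharp.IsPrime where
  ne_top' h := by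
    obtain ⟨r, hr, h1r⟩ : (1 : R) ∈ hI.sharp := h ▸ Submodule.mem_top
    exact hr (by simpa using h1r)
  mem_or_mem' := by
    rintro x y ⟨r, hr, hxyr⟩
    by_cases hyr : y * r ∈ I
    · exact .inr ⟨r, hr, hyr⟩
    · exact .inl ⟨y * r, hyr, by rwa [← mul_assoc]⟩

end

/-- Let `R` be an arithmetical ring and `I` a proper ideal.  Then `I` is weakly prime if and
only if `I = I·R_p ∩ R` for some prime ideal `p` of `R`.  Moreover, if `I` is weakly prime,
then `I = I·R_p ∩ R` for every prime ideal `p` with `I^# ⊆ p`. -/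
theorem stmt2 {R : Type*} [CommRing R] (hR : IsArithmetical R)
    (I : Ideal R) (hI : I ≠ ⊤) :
    (IsWeaklyPrime I ↔ ∃ (p : Ideal R) (hp : p.IsPrime), I = locContract I p hp) ∧
    (IsWeaklyPrime I → ∀ (p : Ideal R) (hp : p.IsPrime),
      {a : R | ∃ r ∉ I, a * r ∈ I} ⊆ ↑p → I = locContract I p hp) := by
  refine ⟨⟨fun hWP => ?_, ?_⟩, fun _ p hp => eq_locContract_of_sharpSet_subset hp⟩
  · exact ⟨hWP.sharp, hWP.sharp_isPrime, eq_locContract_of_sharpSet_subset _ subset_rfl⟩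
  · rintro ⟨p, hp, hEq⟩
    have := hR.preValuationRing_atPrime p
    exact IsWeaklyPrime.of_eq_locContract p hI hEq
end

section
/- Let R be an arithmetical ring and p a prime ideal of R. Then the set of weakly prime ideals I of R with I^# ⊆ p is totally ordered by inclusion: if I and J are weakly prime ideals with I^# ⊆ p and J^# ⊆ p, then I ⊆ J or J ⊆ I. -/
/-! If `I^#` is contained in a prime `m`, elements outside `m` are regular modulo `I`, so `I` is
contracted from `R_m`.
Since the ideals of `R_m` are totally ordered for `m` maximal and contraction is monotone, any two
such ideals are comparable. -/

theorem IsLocalization.under_map_of_mul_mem_imp {R S : Type*} [CommRing R] [CommRing S]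
    [Algebra R S] (M : Submonoid R) [IsLocalization M S] {I : Ideal R}
    (hM : ∀ s ∈ M, ∀ a, s * a ∈ I → a ∈ I) :
    (I.map (algebraMap R S)).under R = I := by
  refine le_antisymm (fun a ha ↦ ?_) Ideal.le_comap_map
  rw [Ideal.mem_comap, IsLocalization.mem_map_algebraMap_iff M S] at ha
  obtain ⟨⟨b, s⟩, h⟩ := ha
  replace h : algebraMap R S (s * a) = algebraMap R S b := by
    simpa only [← map_mul, mul_comm] using h
  obtain ⟨c, hc⟩ := (IsLocalization.eq_iff_exists M S).1 h
  refine hM (c * s) (c * s).2 a ?_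
  rw [mul_assoc, hc]
  exact I.mul_mem_left c b.2

theorem Ideal.under_map_atPrime_of_setOf_zeroDivisor_subset {R : Type*} [CommRing R]
    {I m : Ideal R} [m.IsPrime] (hIm : {a : R | ∃ r ∉ I, a * r ∈ I} ⊆ ↑m) :
    (I.map (algebraMap R (Localization.AtPrime m))).under R = I :=
  IsLocalization.under_map_of_mul_mem_imp m.primeCompl fun _ hs a hsa ↦
    by_contra fun haI ↦ hs (hIm ⟨a, haI, hsa⟩)

theorem stmt3_general {R : Type*} [CommRing R] (hR : IsArithmetical R)
    (p : Ideal R) (hp : p.IsPrime) (I J : Ideal R)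
    (hIp : {a : R | ∃ r ∉ I, a * r ∈ I} ⊆ ↑p)
    (hJp : {a : R | ∃ r ∉ J, a * r ∈ J} ⊆ ↑p) :
    I ≤ J ∨ J ≤ I := by
  obtain ⟨m, hm, hpm⟩ := p.exists_le_maximal hp.ne_top
  have hI := Ideal.under_map_atPrime_of_setOf_zeroDivisor_subset (hIp.trans hpm)
  have hJ := Ideal.under_map_atPrime_of_setOf_zeroDivisor_subset (hJp.trans hpm)
  refine (hR m (I.map (algebraMap R _)) (J.map (algebraMap R _))).imp (fun h ↦ ?_) (fun h ↦ ?_)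
  · exact hI ▸ hJ ▸ Ideal.comap_mono h
  · exact hJ ▸ hI ▸ Ideal.comap_mono h

/-- Let `R` be an arithmetical ring and `p` a prime ideal of `R`.  The set of weakly prime
ideals `I` with `I^# ⊆ p` is totally ordered by inclusion. -/
theorem stmt3 {R : Type*} [CommRing R] (hR : IsArithmetical R)
    (p : Ideal R) (hp : p.IsPrime) (I J : Ideal R)
    (hI : IsWeaklyPrime I) (hJ : IsWeaklyPrime J)
    (hIp : {a : R | ∃ r ∉ I, a * r ∈ I} ⊆ ↑p)
    (hJp : {a : R | ∃ r ∉ J, a * r ∈ J} ⊆ ↑p) :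
    I ≤ J ∨ J ≤ I :=
  stmt3_general hR p hp I J hIp hJp
end

section
/- Let R be a Prüfer domain, J a weakly prime ideal of R, and K a nonzero finitely generated ideal of R. Then (J_K : K) = J, where J_K := {a ∈ R : (aR : K) ⊆ J}. Moreover, if K ⊄ J, then (J : K)_K = J, i.e., {a ∈ R : (aR : K) ⊆ (J : K)} = J. -/
open Ideal

section Arithmetical

variable {R : Type*} [CommRing R]

lemma exists_mem_primeCompl_mul_mem_span_singleton {m : Ideal R} [m.IsPrime] {i j : R}
    (h : span {algebraMap R (Localization.AtPrime m) i} ≤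
      span {algebraMap R (Localization.AtPrime m) j}) :
    ∃ u ∈ m.primeCompl, u * i ∈ span {j} := by
  have hi : algebraMap R (Localization.AtPrime m) i ∈ (span {j}).map (algebraMap R _) := by
    rw [map_span, Set.image_singleton]
    exact h (mem_span_singleton_self _)
  exact (IsLocalization.algebraMap_mem_map_algebraMap_iff m.primeCompl _ _ _).1 hi

/-- Locally, `K = span s` is generated by one of the elements of `s`. -/
lemma IsArithmetical.exists_colon_span_not_le (hR : IsArithmetical R) (m : Ideal R)
    [m.IsMaximal] {s : Finset R} (hs : s.Nonempty) :
    ∃ j ∈ s, ¬ (span {j}).colon (span (s : Set R)) ≤ m := by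
  let f : R → Ideal (Localization.AtPrime m) := fun i => span {algebraMap R _ i}
  obtain ⟨j, hj, hjmax⟩ := s.exists_maximalFor f hs
  have hle : ∀ i ∈ s, f i ≤ f j := fun i hi =>
    (hR m (f i) (f j)).elim id (hjmax hi)
  refine ⟨j, hj, fun hcolon => ?_⟩
  have hinf : s.inf (fun i => (span {j}).colon {i}) ≤ m := by
    refine le_trans (fun u hu => ?_) hcolon
    rw [colon_span, Submodule.mem_colon]
    exact fun i hi =>
      Submodule.mem_colon_singleton.1 (Finset.inf_le (f := fun i => (span {j}).colon {i}) hi hu)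
  obtain ⟨i, hi, him⟩ := (IsMaximal.isPrime ‹_›).inf_le'.1 hinf
  obtain ⟨u, hu, hui⟩ := exists_mem_primeCompl_mul_mem_span_singleton (hle i hi)
  exact hu (him (Submodule.mem_colon_singleton.2 hui))

lemma IsArithmetical.iSup_colon_span_eq_top (hR : IsArithmetical R) {s : Finset R}
    (hs : s.Nonempty) : ⨆ k ∈ s, (span {k}).colon (span (s : Set R)) = ⊤ := by
  by_contra hne
  obtain ⟨m, _, hle⟩ := exists_le_maximal _ hne
  obtain ⟨j, hj, hjm⟩ := hR.exists_colon_span_not_le m hs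
  exact hjm (le_trans (le_iSup₂ (f := fun k _ => (span {k}).colon (span (s : Set R))) j hj) hle)

lemma IsArithmetical.le_of_forall_mul_colon_le (hR : IsArithmetical R) {s : Finset R}
    (hs : s.Nonempty) {I L : Ideal R}
    (h : ∀ k ∈ s, I * (span {k}).colon (span (s : Set R)) ≤ L) : I ≤ L :=
  calc I = I * ⨆ k ∈ s, (span {k}).colon (span (s : Set R)) := by
        rw [hR.iSup_colon_span_eq_top hs, mul_top]
    _ = ⨆ k ∈ s, I * (span {k}).colon (span (s : Set R)) := by
        simp only [mul_iSup]
    _ ≤ L := iSup₂_le h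

end Arithmetical

section Colon

variable {R : Type*} [CommRing R]

lemma span_singleton_mul_le_colon_span_singleton_mul (x k : R) (S : Set R) :
    span {x} * (span {k}).colon S ≤ (span {x * k}).colon S := by
  rw [span_singleton_mul_le_iff]
  intro c hc
  rw [Submodule.mem_colon] at hc ⊢
  intro p hp
  obtain ⟨f, hf⟩ := mem_span_singleton'.1 (hc p hp)
  exact mem_span_singleton'.2 ⟨f, by rw [smul_eq_mul] at hf ⊢; linear_combination x * hf⟩

lemma span_singleton_mul_colon_le_of_mem {J K : Ideal R} {k : R} (hk : k ∈ K) :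
    span {k} * J.colon K ≤ J :=
  span_singleton_mul_le_iff.2 fun _ hc => mul_comm k _ ▸ Submodule.mem_colon.1 hc k hk

variable [IsDomain R] {K : Ideal R}

lemma colon_bot_eq_bot_of_ne_bot (hK : K ≠ ⊥) : (⊥ : Ideal R).colon K = ⊥ := by
  obtain ⟨k₀, hk₀K, hk₀⟩ := (Submodule.ne_bot_iff K).1 hK
  refine eq_bot_iff.2 fun b hb => ?_
  have hbk : b * k₀ = 0 := Submodule.mem_colon.1 hb k₀ hk₀K
  exact (mul_eq_zero.1 hbk).resolve_right hk₀

lemma colon_span_singleton_mul_le (hK : K ≠ ⊥) {k : R} (hk : k ∈ K) (x : R) :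
    (span {x * k}).colon K ≤ span {x} := by
  rcases eq_or_ne k 0 with rfl | hk0
  · rw [mul_zero, span_singleton_eq_bot.2 rfl, colon_bot_eq_bot_of_ne_bot hK]
    exact bot_le
  intro b hb
  obtain ⟨c, hc⟩ := mem_span_singleton'.1 (Submodule.mem_colon.1 hb k hk)
  rw [smul_eq_mul] at hc
  exact mem_span_singleton'.2 ⟨c, mul_right_cancel₀ hk0 (by linear_combination hc)⟩

lemma inf_mul_colon_span_singleton_le (hK : K ≠ ⊥) (I : Ideal R) (k : R) :
    (I ⊓ K) * (span {k}).colon K ≤ span {k} * I.colon K := by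
  rw [mul_le]
  rintro t ⟨htI, htK⟩ c hc
  rcases eq_or_ne k 0 with rfl | hk0
  · rw [span_singleton_eq_bot.2 rfl, colon_bot_eq_bot_of_ne_bot hK, mem_bot] at hc
    rw [hc, mul_zero]
    exact zero_mem _
  obtain ⟨e, he⟩ := mem_span_singleton'.1 (Submodule.mem_colon.1 hc t htK)
  refine mem_span_singleton_mul.2 ⟨e, Submodule.mem_colon.2 fun p hp => ?_, by
    rw [smul_eq_mul] at he; linear_combination he⟩
  obtain ⟨f, hf⟩ := mem_span_singleton'.1 (Submodule.mem_colon.1 hc p hp)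
  rw [smul_eq_mul] at hf he ⊢
  -- `e p k = c t p = f k t`, and `k ≠ 0` cancels
  have hep : e * p = f * t := mul_right_cancel₀ hk0 (by linear_combination p * he - t * hf)
  exact hep ▸ I.mul_mem_left f htI

end Colon

/-- Let `R` be a Prüfer domain, `J` a weakly prime ideal and `K` a nonzero finitely generated
ideal.  Then `(J_K : K) = J`, where `J_K = {a | (aR : K) ⊆ J}`; concretely,
`x ∈ (J_K : K)` iff `x·k ∈ J_K` for all `k ∈ K`.  Moreover, if `K ⊄ J`, then
`(J : K)_K = J`, i.e. `{a | (aR : K) ⊆ (J : K)} = J`. -/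
theorem stmt5 {R : Type*} [CommRing R] [IsDomain R] (hR : IsArithmetical R)
    (J : Ideal R) (hJ : IsWeaklyPrime J)
    (K : Ideal R) (hKfg : K.FG) (hK : K ≠ ⊥) :
    ({x : R | ∀ k ∈ K, (Ideal.span {x * k}).colon K ≤ J} = (J : Set R)) ∧
    (¬ K ≤ J → {a : R | (Ideal.span {a}).colon K ≤ J.colon K} = (J : Set R)) := by
  obtain ⟨s, rfl⟩ := hKfg
  have hs : s.Nonempty := Finset.nonempty_iff_ne_empty.2 (by rintro rfl; simp at hK)
  refine ⟨Set.ext fun x => ⟨fun hx => ?_, fun hxJ k hk => ?_⟩,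
    fun hKJ => Set.ext fun a => ⟨fun ha => ?_, fun haJ => ?_⟩⟩
  · refine (span_singleton_le_iff_mem J).1 (hR.le_of_forall_mul_colon_le hs fun k hk => ?_)
    exact (span_singleton_mul_le_colon_span_singleton_mul x k _).trans
      (hx k (subset_span hk))
  · exact (colon_span_singleton_mul_le hK hk x).trans ((span_singleton_le_iff_mem J).2 hxJ)
  · have hinf : span {a} ⊓ span (s : Set R) ≤ J :=
      hR.le_of_forall_mul_colon_le hs fun k hk =>
        calc _ ≤ span {k} * (span {a}).colon (span (s : Set R)) :=
              inf_mul_colon_span_singleton_le hK _ k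
          _ ≤ span {k} * J.colon (span (s : Set R)) := mul_mono_right ha
          _ ≤ J := span_singleton_mul_colon_le_of_mem (subset_span hk)
    exact ((hJ.2 _ _ ⟨{a}, by simp⟩ ⟨s, rfl⟩ hinf).resolve_right hKJ)
      (mem_span_singleton_self a)
  · exact Submodule.colon_mono ((span_singleton_le_iff_mem J).2 haJ) le_rfl
end

section
/- Let R be a Prüfer domain and A, B, C, D finitely generated ideals of R. Then A·C ⊆ A·B + C·D if and only if (B : C) + (D : A) = R. -/
/-!
Both conditions are local. The inclusion `A·C ⊆ A·B + C·D` always follows from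
`x + y = 1` with `x ∈ (B : C)`, `y ∈ (D : A)`, via `r s = r (x s) + s (y r)`. Conversely, if
`(B : C) + (D : A)` lay in a maximal ideal `m`, then in the valuation domain `R_m` the ideals
`A_m = (a)` and `C_m = (c)` are principal and `a c = a b + c d` with `b ∈ B_m`, `d ∈ D_m`.
Either `b ∣ c`, so `C_m ⊆ B_m`; or `b = c e` and `a (1 - e) = d`, and since `R_m` is local
one of `e`, `1 - e` is a unit, giving `C_m ⊆ B_m` or `A_m ⊆ D_m`. As `C` and `A` are finitely
generated, this produces an element outside `m` in `(B : C)` or in `(D : A)`.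
-/

open Ideal

theorem Ideal.mul_le_mul_add_mul_of_colon_add_colon_eq_top {R : Type*} [CommRing R]
    {A B C D : Ideal R} (h : B.colon C + D.colon A = ⊤) : A * C ≤ A * B + C * D := by
  obtain ⟨x, hx, y, hy, hxy⟩ := Submodule.mem_sup.mp (h ▸ Submodule.mem_top : (1 : R) ∈ _)
  refine mul_le.mpr fun r hr s hs => ?_
  have hxs : x * s ∈ B := Submodule.mem_colon.mp hx s hs
  have hyr : y * r ∈ D := Submodule.mem_colon.mp hy r hr
  have hrs : r * s = r * (x * s) + s * (y * r) := by linear_combination (-(r * s)) * hxy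
  rw [hrs]
  exact Submodule.add_mem_sup (mul_mem_mul hr hxs) (mul_mem_mul hs hyr)

theorem ValuationRing.mem_or_mem_of_mul_mem {S : Type*} [CommRing S] [IsDomain S]
    [ValuationRing S] {a c : S} {B D : Ideal S}
    (h : a * c ∈ span {a} * B + span {c} * D) : c ∈ B ∨ a ∈ D := by
  obtain ⟨_, hx, _, hy, hxy⟩ := Submodule.mem_sup.mp h
  obtain ⟨b, hb, rfl⟩ := mem_span_singleton_mul.mp hx
  obtain ⟨d, hd, rfl⟩ := mem_span_singleton_mul.mp hy
  rcases ValuationRing.dvd_total b c with ⟨k, rfl⟩ | ⟨e, rfl⟩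
  · exact Or.inl (B.mul_mem_right k hb)
  rcases eq_or_ne c 0 with rfl | hc
  · exact Or.inl B.zero_mem
  have hd_eq : a * (1 - e) = d := mul_left_cancel₀ hc (by linear_combination -hxy)
  rcases IsLocalRing.isUnit_or_isUnit_one_sub_self e with he | he
  · exact Or.inl ((mul_unit_mem_iff_mem B he).mp hb)
  · exact Or.inr ((mul_unit_mem_iff_mem D he).mp (hd_eq ▸ hd))

theorem ValuationRing.le_or_le_of_mul_le_mul_add_mul {S : Type*} [CommRing S] [IsDomain S]
    [ValuationRing S] {A B C D : Ideal S} (hA : A.FG) (hC : C.FG)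
    (h : A * C ≤ A * B + C * D) : C ≤ B ∨ A ≤ D := by
  obtain ⟨a, rfl⟩ := (IsBezout.isPrincipal_of_FG A hA).principal
  obtain ⟨c, rfl⟩ := (IsBezout.isPrincipal_of_FG C hC).principal
  simp only [submodule_span_eq, span_singleton_le_iff_mem]
  exact ValuationRing.mem_or_mem_of_mul_mem
    (h (mul_mem_mul (mem_span_singleton_self a) (mem_span_singleton_self c)))

theorem Ideal.colon_span_finset_eq_inf {R : Type*} [CommRing R] (B : Ideal R) (t : Finset R) :
    B.colon (span (t : Set R)) = t.inf fun x => B.colon {x} := by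
  ext r
  simp [Submodule.mem_colon, Submodule.mem_finsetInf]

theorem Ideal.colon_not_le_of_map_le {R S : Type*} [CommRing R] [CommRing S] [Algebra R S]
    (p : Ideal R) [p.IsPrime] [IsLocalization.AtPrime S p] {B C : Ideal R} (hC : C.FG)
    (h : C.map (algebraMap R S) ≤ B.map (algebraMap R S)) : ¬ B.colon C ≤ p := by
  obtain ⟨t, rfl⟩ := hC
  rw [colon_span_finset_eq_inf, IsPrime.inf_le' ‹p.IsPrime›]
  rintro ⟨x, hxt, hxp⟩
  obtain ⟨s, hs, hsx⟩ :=
    (IsLocalization.algebraMap_mem_map_algebraMap_iff (S := S) p.primeCompl B x).mp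
      (h (mem_map_of_mem _ (subset_span hxt)))
  exact hs (hxp (Submodule.mem_colon_singleton.mpr hsx))

theorem IsArithmetical.valuationRing_localization {R : Type*} [CommRing R] [IsDomain R]
    (hR : IsArithmetical R) (m : Ideal R) [m.IsMaximal] :
    ValuationRing (Localization.AtPrime m) :=
  ValuationRing.iff_ideal_total.mpr ⟨hR m⟩

theorem stmt10_general {R : Type*} [CommRing R] [IsDomain R] (hR : IsArithmetical R)
    (A B C D : Ideal R) (hA : A.FG) (hC : C.FG) :
    A * C ≤ A * B + C * D ↔ B.colon C + D.colon A = ⊤ := by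
  refine ⟨fun h => ?_, mul_le_mul_add_mul_of_colon_add_colon_eq_top⟩
  by_contra hne
  obtain ⟨m, hm, hle⟩ := exists_le_maximal _ hne
  have := hR.valuationRing_localization m
  have hloc := map_mono (f := algebraMap R (Localization.AtPrime m)) h
  simp only [Ideal.map_mul, Ideal.add_eq_sup, Ideal.map_sup] at hloc
  rcases ValuationRing.le_or_le_of_mul_le_mul_add_mul (hA.map _) (hC.map _) hloc with hCB | hAD
  · exact colon_not_le_of_map_le m hC hCB (le_sup_left.trans hle)
  · exact colon_not_le_of_map_le m hA hAD (le_sup_right.trans hle)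

/-- Let `R` be a Prüfer domain and `A, B, C, D` finitely generated ideals of `R`.  Then
`A·C ⊆ A·B + C·D` if and only if `(B : C) + (D : A) = R`. -/
theorem stmt10 {R : Type*} [CommRing R] [IsDomain R] (hR : IsArithmetical R)
    (A B C D : Ideal R) (hA : A.FG) (hB : B.FG) (hC : C.FG) (hD : D.FG) :
    A * C ≤ A * B + C * D ↔ B.colon C + D.colon A = ⊤ :=
  stmt10_general hR A B C D hA hC
end

section
/- Let R be an arithmetical ring and A, B finitely generated ideals of R. Then (A·B : B) = A + (0 : B), where (0 : B) = {a ∈ R : aB = 0} is the annihilator of B. -/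
open Ideal

theorem isBezout_of_le_total {R : Type*} [CommRing R] (h : ∀ I J : Ideal R, I ≤ J ∨ J ≤ I) :
    IsBezout R :=
  IsBezout.iff_span_pair_isPrincipal.2 fun x y => by
    rw [span_insert]
    rcases h (span {x}) (span {y}) with hle | hle
    · rw [sup_eq_right.2 hle]
      exact ⟨y, rfl⟩
    · rw [sup_eq_left.2 hle]
      exact ⟨x, rfl⟩

namespace Ideal

variable {R : Type*} [CommRing R]

theorem sup_bot_colon_le_mul_colon (A B : Ideal R) :
    A ⊔ (⊥ : Ideal R).colon B ≤ (A * B).colon B :=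
  sup_le (fun _ ha => Submodule.mem_colon.2 fun _ hb => mul_mem_mul ha hb)
    (Submodule.colon_mono bot_le subset_rfl)

theorem mul_span_singleton_colon_le (A : Ideal R) (b : R) :
    (A * span {b}).colon (span {b}) ≤ A ⊔ (⊥ : Ideal R).colon (span {b}) := by
  intro x hx
  obtain ⟨a, ha, hab⟩ := mem_mul_span_singleton.1 (mem_colon_span_singleton.1 hx)
  have hann : x - a ∈ (⊥ : Ideal R).colon (span {b}) := by
    rw [mem_colon_span_singleton, Submodule.mem_bot]
    linear_combination -hab
  simpa using Submodule.add_mem_sup ha hann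

theorem map_colon_le {S : Type*} [CommRing S] (f : R →+* S) (I J : Ideal R) :
    (I.colon J).map f ≤ (I.map f).colon (J.map f) := by
  rw [map_le_iff_le_comap]
  intro x hx
  show f x ∈ (I.map f).colon (span (f '' J))
  rw [Ideal.colon_span, Submodule.mem_colon]
  rintro _ ⟨j, hj, rfl⟩
  rw [smul_eq_mul, ← map_mul]
  exact mem_map_of_mem f (Submodule.mem_colon.1 hx j hj)

theorem bot_colon_map_le_of_fg {S : Type*} [CommRing S] [Algebra R S] (M : Submonoid R)
    [IsLocalization M S] {B : Ideal R} (hB : B.FG) :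
    (⊥ : Ideal S).colon (B.map (algebraMap R S)) ≤
      ((⊥ : Ideal R).colon B).map (algebraMap R S) := by
  obtain ⟨t, rfl⟩ := hB
  intro z hz
  obtain ⟨⟨x, s⟩, rfl⟩ := IsLocalization.mk'_surjective M z
  have hkill (b : t) : ∃ c : M, (c : R) * (x * b) = 0 := by
    have hzb := Submodule.mem_colon.1 hz _ (mem_map_of_mem (algebraMap R S) (subset_span b.2))
    rwa [smul_eq_mul, Submodule.mem_bot, mul_comm, IsLocalization.mul_mk'_eq_mk'_of_mul,
      IsLocalization.mk'_eq_zero_iff, mul_comm (b : R)] at hzb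
  choose c hc using hkill
  rw [IsLocalization.mk'_mem_map_algebraMap_iff]
  refine ⟨∏ b : t, (c b : R), M.prod_mem fun b _ => (c b).2, ?_⟩
  rw [Ideal.colon_span, Submodule.mem_colon]
  intro b hb
  obtain ⟨d, hd⟩ := Finset.dvd_prod_of_mem (fun b : t => (c b : R)) (Finset.mem_univ ⟨b, hb⟩)
  rw [smul_eq_mul, Submodule.mem_bot, hd]
  linear_combination d * hc ⟨b, hb⟩

end Ideal

theorem stmt11_general {R : Type*} [CommRing R] (hR : IsArithmetical R)
    (A B : Ideal R) (hB : B.FG) :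
    (A * B).colon B = A + (⊥ : Ideal R).colon B := by
  refine le_antisymm (fun x hx => mem_of_localization_maximal fun P _ => ?_)
    (sup_bot_colon_le_mul_colon A B)
  let f := algebraMap R (Localization.AtPrime P)
  have := isBezout_of_le_total (hR P)
  obtain ⟨b, hb⟩ : ∃ b, B.map f = span {b} := (IsBezout.isPrincipal_of_FG _ (hB.map f)).principal
  have hx' : f x ∈ (A.map f * span {b}).colon (span {b}) := by
    rw [← hb, ← Ideal.map_mul]
    exact map_colon_le f _ _ (mem_map_of_mem f hx)
  rw [Submodule.add_eq_sup, Ideal.map_sup]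
  have hann := bot_colon_map_le_of_fg (S := Localization.AtPrime P) P.primeCompl hB
  rw [hb] at hann
  exact sup_le_sup_left hann _ (mul_span_singleton_colon_le _ _ hx')

/-- Let `R` be an arithmetical ring and `A, B` finitely generated ideals of `R`.  Then
`(A·B : B) = A + (0 : B)`, where `(0 : B)` is the annihilator of `B`. -/
theorem stmt11 {R : Type*} [CommRing R] (hR : IsArithmetical R)
    (A B : Ideal R) (hA : A.FG) (hB : B.FG) :
    (A * B).colon B = A + (⊥ : Ideal R).colon B :=
  stmt11_general hR A B hB
end

section
/- Let R be a Prüfer domain and A a proper finitely generated ideal of R such that the quotient ring R/A is not a valuation ring, i.e., the ideals of R/A are not totally ordered by inclusion. Then there exist finitely generated ideals B, C of R with A ⊆ B, A ⊆ C, B + C = R, B ⊄ C and C ⊄ B. -/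
namespace Ideal

variable {R : Type*} [CommRing R]

theorem le_of_map_localization_le {m : Ideal R} [m.IsMaximal] {I J : Ideal R}
    (hJ : ∀ m' : Ideal R, m'.IsMaximal → J ≤ m' → m' = m)
    (h : I.map (algebraMap R (Localization.AtPrime m)) ≤
      J.map (algebraMap R (Localization.AtPrime m))) :
    I ≤ J := by
  intro x hx
  obtain ⟨s, hs, hsx⟩ := (IsLocalization.algebraMap_mem_map_algebraMap_iff m.primeCompl _ J x).mp
    (h (mem_map_of_mem _ hx))
  have hJs : J ⊔ span {s} = ⊤ := by
    by_contra hne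
    obtain ⟨m', hm', hle⟩ := exists_le_maximal _ hne
    exact hs (hJ m' hm' (le_sup_left.trans hle) ▸ hle (mem_sup_right (mem_span_singleton_self s)))
  obtain ⟨j, hj, t, ht, hjt⟩ :=
    Submodule.mem_sup.mp (hJs ▸ Submodule.mem_top : (1 : R) ∈ J ⊔ span {s})
  obtain ⟨r, rfl⟩ := mem_span_singleton'.mp ht
  rw [show x = j * x + r * (s * x) by linear_combination (-x) * hjt]
  exact add_mem (J.mul_mem_right x hj) (J.mul_mem_left r hsx)

theorem exists_fg_sup_eq_top_of_isMaximal_ne {A m₁ m₂ : Ideal R} (hA : A.FG)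
    (hm₁ : m₁.IsMaximal) (hm₂ : m₂.IsMaximal) (hAm₁ : A ≤ m₁) (hAm₂ : A ≤ m₂) (hne : m₁ ≠ m₂) :
    ∃ B C : Ideal R, B.FG ∧ C.FG ∧ A ≤ B ∧ A ≤ C ∧ B + C = ⊤ ∧ ¬ B ≤ C ∧ ¬ C ≤ B := by
  obtain ⟨u, hu, v, hv, huv⟩ :=
    Submodule.mem_sup.mp (hm₁.coprime_of_ne hm₂ hne ▸ Submodule.mem_top : (1 : R) ∈ m₁ ⊔ m₂)
  have hB : A ⊔ span {u} ≤ m₁ := sup_le hAm₁ (span_singleton_le_iff_mem _ |>.mpr hu)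
  have hC : A ⊔ span {v} ≤ m₂ := sup_le hAm₂ (span_singleton_le_iff_mem _ |>.mpr hv)
  have hu₂ : u ∉ m₂ := fun h => hm₂.ne_top ((eq_top_iff_one _).mpr (huv ▸ add_mem h hv))
  have hv₁ : v ∉ m₁ := fun h => hm₁.ne_top ((eq_top_iff_one _).mpr (huv ▸ add_mem hu h))
  have hu_mem : u ∈ A ⊔ span {u} := mem_sup_right (mem_span_singleton_self u)
  have hv_mem : v ∈ A ⊔ span {v} := mem_sup_right (mem_span_singleton_self v)
  refine ⟨A ⊔ span {u}, A ⊔ span {v}, Submodule.FG.sup hA (Submodule.fg_span_singleton u),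
    Submodule.FG.sup hA (Submodule.fg_span_singleton v), le_sup_left, le_sup_left, ?_,
    fun h => hu₂ (hC (h hu_mem)), fun h => hv₁ (hB (h hv_mem))⟩
  rw [Submodule.add_eq_sup, eq_top_iff_one, ← huv]
  exact add_mem (mem_sup_left hu_mem) (mem_sup_right hv_mem)

end Ideal

theorem IsArithmetical.le_total_quotient {R : Type*} [CommRing R] (hR : IsArithmetical R)
    {A m : Ideal R} [m.IsMaximal] (hA : ∀ m' : Ideal R, m'.IsMaximal → A ≤ m' → m' = m)
    (I J : Ideal (R ⧸ A)) : I ≤ J ∨ J ≤ I := by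
  have hmk := Ideal.Quotient.mk_surjective (I := A)
  have hunique (K : Ideal (R ⧸ A)) (m' : Ideal R) (hm' : m'.IsMaximal)
      (hle : K.comap (Ideal.Quotient.mk A) ≤ m') : m' = m :=
    hA m' hm' ((Ideal.mk_ker (I := A)).symm.le.trans (Ideal.ker_le_comap _) |>.trans hle)
  rw [← Ideal.comap_le_comap_iff_of_surjective _ hmk,
    ← Ideal.comap_le_comap_iff_of_surjective _ hmk J I]
  exact (hR m _ _).imp (Ideal.le_of_map_localization_le (hunique J))
    (Ideal.le_of_map_localization_le (hunique I))

theorem stmt12_general {R : Type*} [CommRing R] (hR : IsArithmetical R)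
    (A : Ideal R) (hAfg : A.FG) (hA : A ≠ ⊤)
    (hval : ¬ ∀ I J : Ideal (R ⧸ A), I ≤ J ∨ J ≤ I) :
    ∃ B C : Ideal R, B.FG ∧ C.FG ∧ A ≤ B ∧ A ≤ C ∧ B + C = ⊤ ∧ ¬ B ≤ C ∧ ¬ C ≤ B := by
  obtain ⟨m₁, hm₁, hAm₁⟩ := A.exists_le_maximal hA
  obtain ⟨m₂, hm₂, hAm₂, hne⟩ : ∃ m₂ : Ideal R, m₂.IsMaximal ∧ A ≤ m₂ ∧ m₂ ≠ m₁ := by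
    by_contra! hunique
    exact hval (hR.le_total_quotient hunique)
  exact Ideal.exists_fg_sup_eq_top_of_isMaximal_ne hAfg hm₁ hm₂ hAm₁ hAm₂ hne.symm

/-- Let `R` be a Prüfer domain and `A` a proper finitely generated ideal such that the
ideals of `R/A` are not totally ordered by inclusion.  Then there exist finitely generated
ideals `B, C` containing `A` with `B + C = R` which are incomparable. -/
theorem stmt12 {R : Type*} [CommRing R] [IsDomain R] (hR : IsArithmetical R)
    (A : Ideal R) (hAfg : A.FG) (hA : A ≠ ⊤)
    (hval : ¬ ∀ I J : Ideal (R ⧸ A), I ≤ J ∨ J ≤ I) :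
    ∃ B C : Ideal R, B.FG ∧ C.FG ∧ A ≤ B ∧ A ≤ C ∧ B + C = ⊤ ∧ ¬ B ≤ C ∧ ¬ C ≤ B :=
  stmt12_general hR A hAfg hA hval
end

section
/- Let Γ be a lattice-ordered abelian group. Let C be the set of all a ∈ Γ such that for each of e = a⁺ and e = a⁻ there exists a finite chain 0 = c₀ ≤ c₁ ≤ ⋯ ≤ c_n = e in Γ such that each interval [c_i, c_{i+1}] has at most two elements. Then C is a convex ℓ-subgroup of Γ, and the set of nonnegative elements of C is precisely the set of finite sums of elements b ∈ Γ⁺ with [0, b] having at most two elements (i.e., b = 0 or b is an atom of Γ⁺, meaning b > 0 and there is no c with 0 < c < b). -/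
/-!
The interval condition on consecutive terms of a chain says `cᵢ ⩿ cᵢ₊₁`, and the elements `b ≥ 0`
with `[0, b]` of at most two elements are those with `0 ⩿ b`. By translation invariance of `⩿`,
a chain `0 = c₀ ⩿ ⋯ ⩿ cₙ = e` is the same as a decomposition of `e` into increments covering `0`,
so the admissible `e` form the submonoid `M` generated by these `b`. The Riesz decomposition
`x = x ⊓ s + (x - s)⁺` of any `0 ≤ x ≤ s + t` makes `M` downward closed in `Γ⁺`, and for such an
`M` the elements with `a⁺, a⁻ ∈ M` form a convex ℓ-subgroup with positive cone `M`, because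
`(a + b)⁺ ≤ a⁺ + b⁺`, `(a ⊔ b)⁺ ≤ a⁺ + b⁺`, `a⁺` is monotone and `a⁻` antitone.
-/

open Relation Set

theorem reflTransGen_iff_exists_chain {α : Type*} {r : α → α → Prop} {a b : α} :
    ReflTransGen r a b ↔
      ∃ (n : ℕ) (c : ℕ → α), c 0 = a ∧ c n = b ∧ ∀ i < n, r (c i) (c (i + 1)) := by
  constructor
  · intro h
    induction h with
    | refl => exact ⟨0, fun _ => a, rfl, rfl, by omega⟩
    | @tail b d _ hbd ih =>
      obtain ⟨n, c, hc0, hcn, hc⟩ := ih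
      refine ⟨n + 1, fun i => if i ≤ n then c i else d, by simpa using hc0, by simp, ?_⟩
      intro i hi
      rcases Nat.lt_succ_iff_lt_or_eq.mp hi with hi | rfl
      · simpa [hi.le, Nat.succ_le_of_lt hi] using hc i hi
      · simpa [hcn] using hbd
  · rintro ⟨n, c, rfl, rfl, hc⟩
    induction n with
    | zero => rfl
    | succ n ih => exact (ih fun i hi => hc i (by omega)).tail (hc n (by omega))

theorem wcovBy_iff_le_and_Icc {α : Type*} [PartialOrder α] {a b : α} :
    a ⩿ b ↔ a ≤ b ∧ ∀ x ∈ Icc a b, x = a ∨ x = b := by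
  simp only [wcovBy_iff_le_and_eq_or_eq, mem_Icc, and_imp]

section OrderedGroup

variable {Γ : Type*} [AddCommGroup Γ] [PartialOrder Γ] [AddLeftMono Γ]

theorem add_wcovBy_add_iff_left {a b : Γ} (c : Γ) : c + a ⩿ c + b ↔ a ⩿ b :=
  apply_wcovBy_apply_iff (OrderIso.addLeft c)

theorem mem_closure_wcovBy_zero_iff {e : Γ} :
    e ∈ AddSubmonoid.closure {b : Γ | 0 ⩿ b} ↔ ReflTransGen (· ⩿ ·) 0 e := by
  constructor
  · intro he
    induction he using AddSubmonoid.closure_induction with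
    | mem b hb => exact .single hb
    | zero => rfl
    | add s t _ _ hs ht =>
      have hshift : ReflTransGen (· ⩿ ·) s (s + t) := by
        simpa [Function.onFun] using
          ReflTransGen.lift (s + ·) (fun _ _ => (add_wcovBy_add_iff_left s).mpr) _ _ ht
      exact hs.trans hshift
  · intro he
    induction he with
    | refl => exact zero_mem _
    | @tail b d _ hbd ih =>
      have hstep : 0 ⩿ d - b := by
        simpa [neg_add_eq_sub] using (add_wcovBy_add_iff_left (-b)).mpr hbd
      simpa using add_mem ih (AddSubmonoid.subset_closure hstep)

theorem nonneg_of_mem_closure_wcovBy_zero {s : Γ} (hs : s ∈ AddSubmonoid.closure {b : Γ | 0 ⩿ b}) :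
    0 ≤ s := by
  induction hs using AddSubmonoid.closure_induction with
  | mem b hb => exact hb.le
  | zero => exact le_rfl
  | add _ _ _ _ hs ht => exact add_nonneg hs ht

end OrderedGroup

section LatticeOrderedGroup

variable {Γ : Type*} [AddCommGroup Γ] [Lattice Γ] [AddLeftMono Γ]

theorem exists_add_of_le_add {x s t : Γ} (hx : 0 ≤ x) (hs : 0 ≤ s) (ht : 0 ≤ t)
    (h : x ≤ s + t) : ∃ y ∈ Icc 0 s, ∃ z ∈ Icc 0 t, x = y + z :=
  ⟨x ⊓ s, ⟨le_inf hx hs, inf_le_right⟩, (x - s)⁺,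
    ⟨posPart_nonneg _, sup_le (sub_le_iff_le_add'.mpr h) ht⟩,
    by rw [inf_eq_sub_posPart_sub, sub_add_cancel]⟩

theorem Icc_subset_closure_wcovBy_zero {s : Γ}
    (hs : s ∈ AddSubmonoid.closure {b : Γ | 0 ⩿ b}) :
    Icc 0 s ⊆ AddSubmonoid.closure {b : Γ | 0 ⩿ b} := by
  induction hs using AddSubmonoid.closure_induction with
  | mem b hb =>
    rw [hb.Icc_eq]
    exact insert_subset (zero_mem _) (singleton_subset_iff.mpr (AddSubmonoid.subset_closure hb))
  | zero => simp
  | add s t hs ht ihs iht =>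
    rintro x ⟨hx, hxst⟩
    obtain ⟨y, hy, z, hz, rfl⟩ := exists_add_of_le_add hx (nonneg_of_mem_closure_wcovBy_zero hs)
      (nonneg_of_mem_closure_wcovBy_zero ht) hxst
    exact add_mem (ihs hy) (iht hz)

theorem posPart_add_le (a b : Γ) : (a + b)⁺ ≤ a⁺ + b⁺ :=
  sup_le (add_le_add (le_posPart a) (le_posPart b))
    (add_nonneg (posPart_nonneg a) (posPart_nonneg b))

theorem negPart_add_le (a b : Γ) : (a + b)⁻ ≤ a⁻ + b⁻ := by
  simpa only [negPart_def, neg_add, posPart_def] using posPart_add_le (-a) (-b)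

end LatticeOrderedGroup

namespace AddSubmonoid

variable {Γ : Type*} [AddCommGroup Γ] [Lattice Γ] [AddLeftMono Γ]

def convexSubgroup (M : AddSubmonoid Γ) (hM : ∀ s ∈ M, Icc 0 s ⊆ M) : AddSubgroup Γ where
  carrier := {a | a⁺ ∈ M ∧ a⁻ ∈ M}
  zero_mem' := by simp [zero_mem]
  add_mem' {a b} ha hb :=
    ⟨hM _ (add_mem ha.1 hb.1) ⟨posPart_nonneg _, posPart_add_le a b⟩,
      hM _ (add_mem ha.2 hb.2) ⟨negPart_nonneg _, negPart_add_le a b⟩⟩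
  neg_mem' {a} ha := by simpa [and_comm] using ha

variable {M : AddSubmonoid Γ} {hM : ∀ s ∈ M, Icc 0 s ⊆ M} {a b x : Γ}

theorem sup_mem_convexSubgroup (ha : a ∈ M.convexSubgroup hM) (hb : b ∈ M.convexSubgroup hM) :
    a ⊔ b ∈ M.convexSubgroup hM := by
  have hle : a ⊔ b ≤ a⁺ + b⁺ := sup_le
    ((le_posPart a).trans (le_add_of_nonneg_right (posPart_nonneg b)))
    ((le_posPart b).trans (le_add_of_nonneg_left (posPart_nonneg a)))
  exact ⟨hM _ (add_mem ha.1 hb.1)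
      ⟨posPart_nonneg _, sup_le hle (add_nonneg (posPart_nonneg a) (posPart_nonneg b))⟩,
    hM _ ha.2 ⟨negPart_nonneg _, negPart_anti le_sup_left⟩⟩

theorem mem_convexSubgroup_of_le_of_le (ha : a ∈ M.convexSubgroup hM)
    (hb : b ∈ M.convexSubgroup hM) (hax : a ≤ x) (hxb : x ≤ b) : x ∈ M.convexSubgroup hM :=
  ⟨hM _ hb.1 ⟨posPart_nonneg x, posPart_mono hxb⟩, hM _ ha.2 ⟨negPart_nonneg x, negPart_anti hax⟩⟩

theorem setOf_mem_convexSubgroup_nonneg (hM₀ : ∀ s ∈ M, 0 ≤ s) :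
    {a | a ∈ M.convexSubgroup hM ∧ 0 ≤ a} = M := by
  ext a
  constructor
  · rintro ⟨⟨ha, -⟩, h0⟩
    rwa [posPart_of_nonneg h0] at ha
  · intro ha
    have h0 := hM₀ a ha
    exact ⟨⟨(posPart_of_nonneg h0).symm ▸ ha, (negPart_of_nonneg h0).symm ▸ zero_mem M⟩, h0⟩

end AddSubmonoid

/-- Let `Γ` be a lattice-ordered abelian group, and let `C` be the set of `a ∈ Γ` such that
both `a⁺ = a ⊔ 0` and `a⁻ = (-a) ⊔ 0` admit a finite chain `0 = c₀ ≤ ⋯ ≤ c_n = e` with each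
interval `[c_i, c_{i+1}]` having at most two elements.  Then `C` is a convex ℓ-subgroup of
`Γ`, and the nonnegative elements of `C` are exactly the finite sums of elements `b ≥ 0`
such that `[0, b]` has at most two elements. -/
theorem stmt13 {Γ : Type*} [AddCommGroup Γ] [Lattice Γ]
    [CovariantClass Γ Γ (· + ·) (· ≤ ·)] :
    let twoChain : Γ → Prop := fun e => ∃ (n : ℕ) (c : ℕ → Γ), c 0 = 0 ∧ c n = e ∧
      ∀ i < n, c i ≤ c (i + 1) ∧
        ∀ x ∈ Set.Icc (c i) (c (i + 1)), x = c i ∨ x = c (i + 1)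
    let C : Set Γ := {a | twoChain (a ⊔ 0) ∧ twoChain ((-a) ⊔ 0)}
    (∃ S : AddSubgroup Γ, (S : Set Γ) = C) ∧
    (∀ a ∈ C, ∀ b ∈ C, a ⊔ b ∈ C) ∧
    (∀ a ∈ C, ∀ b ∈ C, ∀ x : Γ, a ≤ x → x ≤ b → x ∈ C) ∧
    ({a ∈ C | 0 ≤ a} =
      ↑(AddSubmonoid.closure {b : Γ | 0 ≤ b ∧ ∀ x ∈ Set.Icc (0 : Γ) b, x = 0 ∨ x = b})) := by
  intro twoChain C
  have hchain (e : Γ) : twoChain e ↔ e ∈ AddSubmonoid.closure {b : Γ | 0 ⩿ b} := by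
    rw [mem_closure_wcovBy_zero_iff, reflTransGen_iff_exists_chain]
    simp only [twoChain, wcovBy_iff_le_and_Icc]
  have hatoms : {b : Γ | 0 ≤ b ∧ ∀ x ∈ Icc 0 b, x = 0 ∨ x = b} = {b : Γ | 0 ⩿ b} :=
    ext fun _ => wcovBy_iff_le_and_Icc.symm
  let S := (AddSubmonoid.closure {b : Γ | 0 ⩿ b}).convexSubgroup
    fun _ => Icc_subset_closure_wcovBy_zero
  have hC : C = S := ext fun a => and_congr (hchain _) (hchain _)
  rw [hC, hatoms]
  exact ⟨⟨S, rfl⟩, fun a ha b hb => AddSubmonoid.sup_mem_convexSubgroup ha hb,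
    fun a ha b hb x => AddSubmonoid.mem_convexSubgroup_of_le_of_le ha hb,
    AddSubmonoid.setOf_mem_convexSubgroup_nonneg fun _ => nonneg_of_mem_closure_wcovBy_zero⟩
end

section
/- Let Γ be a lattice-ordered abelian group. Let C be the set of all a ∈ Γ such that for each of e = a⁺ and e = a⁻ there exists a finite chain 0 = c₀ ≤ c₁ ≤ ⋯ ≤ c_n = e in Γ such that each interval [c_i, c_{i+1}] is totally ordered. Then C is a convex ℓ-subgroup of Γ, and the set of nonnegative elements of C is precisely the set of finite sums of elements b ∈ Γ⁺ such that the interval [0, b] is totally ordered. -/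
/-!
A chain `0 = c₀ ≤ ⋯ ≤ cₙ = e` with totally ordered steps `[cᵢ, cᵢ₊₁]` is the same as a
decomposition of `e` into the increments `cᵢ₊₁ - cᵢ`, each of which is a basic element `b ≥ 0`
with `[0, b]` totally ordered. So the elements admitting such a chain form the additive
submonoid `M` generated by the basic elements, and `C = {a | |a| ∈ M}`. By the Riesz
decomposition property of ℓ-groups, `M` is downward closed in `Γ⁺`; for any such submonoid
`{a | |a| ∈ M}` is a convex ℓ-subgroup, because `|a + b|`, `|a ⊔ b|` and `|x|` for `a ≤ x ≤ b`
are all bounded by `|a| + |b|`.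
-/

open Set

theorem isChain_iff_total {α : Type*} {r : α → α → Prop} [Std.Refl r] {s : Set α} :
    IsChain r s ↔ ∀ x ∈ s, ∀ y ∈ s, r x y ∨ r y x :=
  ⟨fun h _ hx _ hy => h.total hx hy, fun h x hx y hy _ => h x hx y hy⟩

namespace AddSubmonoid

variable {Γ : Type*} [AddCommGroup Γ]

theorem mem_closure_iff_exists_partialSums {s : Set Γ} {e : Γ} :
    e ∈ closure s ↔
      ∃ (n : ℕ) (c : ℕ → Γ), c 0 = 0 ∧ c n = e ∧ ∀ i < n, c (i + 1) - c i ∈ s := by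
  constructor
  · intro he
    induction he using closure_induction_left with
    | zero => exact ⟨0, fun _ => 0, rfl, rfl, by simp⟩
    | add_left b hb e _ ih =>
      obtain ⟨n, c, hc0, hcn, hstep⟩ := ih
      refine ⟨n + 1, fun | 0 => 0 | j + 1 => b + c j, rfl, by simp [hcn], ?_⟩
      rintro (_ | j) hj
      · simpa [hc0] using hb
      · simpa using hstep j (by omega)
  · rintro ⟨n, c, hc0, rfl, hstep⟩
    suffices ∀ k ≤ n, c k ∈ closure s from this n le_rfl
    intro k hk
    induction k with
    | zero => simp [hc0, zero_mem]
    | succ k ih =>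
      rw [← add_sub_cancel (c k) (c (k + 1))]
      exact add_mem (ih (by omega)) (subset_closure (hstep k hk))

variable [Lattice Γ] [AddLeftMono Γ]

/-- Riesz decomposition: if `0 ≤ y ≤ x₁ + x₂` with `xᵢ ≥ 0`, then `y = y ⊓ x₁ + (y - y ⊓ x₁)`
with `0 ≤ y - y ⊓ x₁ ≤ x₂`. -/
theorem Icc_zero_subset_closure {s : Set Γ} (hs_nonneg : s ⊆ Ici 0)
    (hs : ∀ b ∈ s, Icc 0 b ⊆ s) {e : Γ} (he : e ∈ closure s) : Icc 0 e ⊆ closure s := by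
  have hnonneg : closure s ≤ nonneg Γ := closure_le.2 hs_nonneg
  induction he using closure_induction with
  | mem b hb => exact (hs b hb).trans subset_closure
  | zero => simp [zero_mem]
  | add x₁ x₂ hx₁ hx₂ ih₁ ih₂ =>
    rintro y ⟨hy0, hy⟩
    have hinf : y ⊓ x₁ ∈ closure s := ih₁ ⟨le_inf hy0 (hnonneg hx₁), inf_le_right⟩
    have hrest : y - y ⊓ x₁ ∈ closure s := by
      refine ih₂ ⟨sub_nonneg.2 inf_le_left, ?_⟩
      rw [sub_inf, sub_self]
      exact sup_le (hnonneg hx₂) (sub_le_iff_le_add'.2 hy)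
    simpa using add_mem hinf hrest

theorem abs_mem_iff_posPart_mem_and_negPart_mem {M : AddSubmonoid Γ}
    (hM : ∀ e ∈ M, Icc 0 e ⊆ M) {a : Γ} : |a| ∈ M ↔ a⁺ ∈ M ∧ a⁻ ∈ M := by
  rw [← posPart_add_negPart]
  refine ⟨fun h => ⟨?_, ?_⟩, fun h => add_mem h.1 h.2⟩
  · exact hM _ h ⟨posPart_nonneg a, le_add_of_nonneg_right (negPart_nonneg a)⟩
  · exact hM _ h ⟨negPart_nonneg a, le_add_of_nonneg_left (posPart_nonneg a)⟩

def absPreimage (M : AddSubmonoid Γ) (hM : ∀ e ∈ M, Icc 0 e ⊆ M) : AddSubgroup Γ where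
  carrier := {a | |a| ∈ M}
  zero_mem' := by simp [zero_mem]
  add_mem' {a b} ha hb := hM _ (add_mem ha hb) ⟨abs_nonneg _, abs_add_le a b⟩
  neg_mem' := by simp

variable {M : AddSubmonoid Γ} (hM : ∀ e ∈ M, Icc 0 e ⊆ M)

@[simp]
theorem mem_absPreimage {a : Γ} : a ∈ M.absPreimage hM ↔ |a| ∈ M := Iff.rfl

theorem mem_absPreimage_of_abs_le {a b x : Γ} (ha : a ∈ M.absPreimage hM)
    (hb : b ∈ M.absPreimage hM) (hx : |x| ≤ |a| + |b|) : x ∈ M.absPreimage hM :=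
  hM _ (add_mem ha hb) ⟨abs_nonneg x, hx⟩

theorem sup_mem_absPreimage {a b : Γ} (ha : a ∈ M.absPreimage hM) (hb : b ∈ M.absPreimage hM) :
    a ⊔ b ∈ M.absPreimage hM := by
  refine mem_absPreimage_of_abs_le hM ha hb (abs_le'.2 ⟨sup_le ?_ ?_, ?_⟩)
  · exact (le_abs_self a).trans (le_add_of_nonneg_right (abs_nonneg b))
  · exact (le_abs_self b).trans (le_add_of_nonneg_left (abs_nonneg a))
  · exact (neg_le_neg_iff.2 le_sup_left).trans
      ((neg_le_abs a).trans (le_add_of_nonneg_right (abs_nonneg b)))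

theorem mem_absPreimage_of_le_of_le {a b x : Γ} (ha : a ∈ M.absPreimage hM)
    (hb : b ∈ M.absPreimage hM) (hax : a ≤ x) (hxb : x ≤ b) : x ∈ M.absPreimage hM := by
  refine mem_absPreimage_of_abs_le hM ha hb (abs_le'.2 ⟨?_, ?_⟩)
  · exact hxb.trans ((le_abs_self b).trans (le_add_of_nonneg_left (abs_nonneg a)))
  · exact (neg_le_neg_iff.2 hax).trans
      ((neg_le_abs a).trans (le_add_of_nonneg_right (abs_nonneg b)))

theorem absPreimage_sep_nonneg (hM_nonneg : M ≤ nonneg Γ) :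
    {a ∈ (M.absPreimage hM : Set Γ) | 0 ≤ a} = M := by
  ext a
  refine ⟨fun ⟨ha, ha0⟩ => ?_, fun ha => ⟨?_, hM_nonneg ha⟩⟩
  · simpa [abs_of_nonneg ha0] using ha
  · simpa [abs_of_nonneg (hM_nonneg ha)] using ha

end AddSubmonoid

section BasicElements

variable (Γ : Type*) [AddCommGroup Γ] [PartialOrder Γ]

/-- Conrad's basic elements of `Γ`, together with `0`. -/
def basicElements : Set Γ := {b | 0 ≤ b ∧ IsChain (· ≤ ·) (Icc 0 b)}

def basicSums : AddSubmonoid Γ := AddSubmonoid.closure (basicElements Γ)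

variable {Γ}

theorem sub_mem_basicElements_iff [AddLeftMono Γ] {a b : Γ} :
    b - a ∈ basicElements Γ ↔ a ≤ b ∧ IsChain (· ≤ ·) (Icc a b) := by
  refine and_congr sub_nonneg ?_
  rw [← IsChain.image_iso_iff (φ := OrderIso.addRight a), OrderIso.image_Icc]
  simp

theorem Icc_zero_subset_basicElements {b : Γ} (hb : b ∈ basicElements Γ) :
    Icc 0 b ⊆ basicElements Γ :=
  fun _ hy => ⟨hy.1, hb.2.mono (Icc_subset_Icc_right hy.2)⟩

end BasicElements

theorem Icc_zero_subset_basicSums {Γ : Type*} [AddCommGroup Γ] [Lattice Γ] [AddLeftMono Γ]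
    {e : Γ} (he : e ∈ basicSums Γ) : Icc 0 e ⊆ basicSums Γ :=
  AddSubmonoid.Icc_zero_subset_closure (fun _ hb => hb.1)
    (fun _ => Icc_zero_subset_basicElements) he

/-- Let `Γ` be a lattice-ordered abelian group, and let `C` be the set of `a ∈ Γ` such that
both `a⁺ = a ⊔ 0` and `a⁻ = (-a) ⊔ 0` admit a finite chain `0 = c₀ ≤ ⋯ ≤ c_n = e` with each
interval `[c_i, c_{i+1}]` totally ordered.  Then `C` is a convex ℓ-subgroup of `Γ`, and the
nonnegative elements of `C` are exactly the finite sums of elements `b ≥ 0` such that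
`[0, b]` is totally ordered. -/
theorem stmt14 {Γ : Type*} [AddCommGroup Γ] [Lattice Γ]
    [CovariantClass Γ Γ (· + ·) (· ≤ ·)] :
    let chainDim0 : Γ → Prop := fun e => ∃ (n : ℕ) (c : ℕ → Γ), c 0 = 0 ∧ c n = e ∧
      ∀ i < n, c i ≤ c (i + 1) ∧
        ∀ x ∈ Set.Icc (c i) (c (i + 1)), ∀ y ∈ Set.Icc (c i) (c (i + 1)), x ≤ y ∨ y ≤ x
    let C : Set Γ := {a | chainDim0 (a ⊔ 0) ∧ chainDim0 ((-a) ⊔ 0)}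
    (∃ S : AddSubgroup Γ, (S : Set Γ) = C) ∧
    (∀ a ∈ C, ∀ b ∈ C, a ⊔ b ∈ C) ∧
    (∀ a ∈ C, ∀ b ∈ C, ∀ x : Γ, a ≤ x → x ≤ b → x ∈ C) ∧
    ({a ∈ C | 0 ≤ a} =
      ↑(AddSubmonoid.closure
        {b : Γ | 0 ≤ b ∧ ∀ x ∈ Set.Icc (0 : Γ) b, ∀ y ∈ Set.Icc (0 : Γ) b, x ≤ y ∨ y ≤ x})) := by
  intro chainDim0 C
  have hchain (e : Γ) : chainDim0 e ↔ e ∈ basicSums Γ := by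
    simp only [chainDim0, basicSums, AddSubmonoid.mem_closure_iff_exists_partialSums,
      sub_mem_basicElements_iff, isChain_iff_total]
  set G := (basicSums Γ).absPreimage fun _ => Icc_zero_subset_basicSums
  have hC : C = G := by
    ext a
    rw [SetLike.mem_coe, AddSubmonoid.mem_absPreimage,
      AddSubmonoid.abs_mem_iff_posPart_mem_and_negPart_mem fun _ => Icc_zero_subset_basicSums]
    exact and_congr (hchain _) (hchain _)
  have hbasic : {b : Γ | 0 ≤ b ∧ ∀ x ∈ Set.Icc (0 : Γ) b, ∀ y ∈ Set.Icc (0 : Γ) b,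
      x ≤ y ∨ y ≤ x} = basicElements Γ := by
    simp only [basicElements, isChain_iff_total]
  clear_value chainDim0 C
  subst hC
  rw [hbasic]
  exact ⟨⟨G, rfl⟩, fun a ha b hb => AddSubmonoid.sup_mem_absPreimage _ ha hb,
    fun a ha b hb x => AddSubmonoid.mem_absPreimage_of_le_of_le _ ha hb,
    AddSubmonoid.absPreimage_sep_nonneg _ (AddSubmonoid.closure_le.2 fun _ hb => hb.1)⟩
end

section
/- Let X be a Boolean space and let P = {f ∈ C(X,ℤ) : f ≥ 0} be the positive cone of C(X,ℤ). Call a subset F ⊆ P a multiplication prime filter if F is nonempty, F ≠ P, F is upward closed in P, closed under pointwise minimum (f, g ∈ F implies f ⊓ g ∈ F), and f + g ∈ F implies f ∈ F or g ∈ F. Then the map x ↦ F_x := {f ∈ P : f(x) > 0} is a bijection from X onto the set of multiplication prime filters of P; moreover every multiplication prime filter of P is maximal (with respect to inclusion) among proper filters of P, where a filter of P is a nonempty, upward closed, meet-closed subset of P and it is proper if it is not all of P. -/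
/-!
For a multiplication prime filter `F`, the supports `{f > 0}` of its members are nonempty
clopen sets closed under finite intersections, so by compactness they share a point `x`, and
`F ⊆ F_x`. Splitting a constant upper bound `n = 1 + ⋯ + 1` of a member of `F` shows `1 ∈ F`.
If `g ∈ F_x` and `χ` is the indicator of the zero set of `g`, then `g + χ ≥ 1` lies in `F`,
while `χ ∉ F_x`; primality gives `g ∈ F`, so `F = F_x`. The same `χ` gives maximality: if
`F_x ⊆ G` and `g ∈ G` vanishes at `x`, then `0 = g ⊓ χ ∈ G`. Injectivity of `x ↦ F_x` holds
because clopen sets separate the points of a Boolean space.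
-/

open Set

def IsConeFilter {M : Type*} [Zero M] [Lattice M] (F : Set M) : Prop :=
  F ⊆ {f | 0 ≤ f} ∧ F.Nonempty ∧ (∀ f ∈ F, ∀ g ∈ {f : M | 0 ≤ f}, f ≤ g → g ∈ F) ∧
    ∀ f ∈ F, ∀ g ∈ F, f ⊓ g ∈ F

def IsAddPrime {M : Type*} [Add M] [Zero M] [LE M] (F : Set M) : Prop :=
  ∀ f ∈ {f : M | 0 ≤ f}, ∀ g ∈ {f : M | 0 ≤ f}, f + g ∈ F → f ∈ F ∨ g ∈ F

def IsMultPrimeFilter {M : Type*} [AddCommMonoid M] [Lattice M] (F : Set M) : Prop :=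
  IsConeFilter F ∧ F ≠ {f | 0 ≤ f} ∧ IsAddPrime F

namespace IsConeFilter

variable {M : Type*} [Zero M] [Lattice M] {F : Set M} {f g : M}

theorem nonneg (hF : IsConeFilter F) (hf : f ∈ F) : 0 ≤ f := hF.1 hf

theorem nonempty (hF : IsConeFilter F) : F.Nonempty := hF.2.1

theorem mem_of_le (hF : IsConeFilter F) (hf : f ∈ F) (hfg : f ≤ g) : g ∈ F :=
  hF.2.2.1 f hf g ((hF.nonneg hf).trans hfg) hfg

theorem inf_mem (hF : IsConeFilter F) (hf : f ∈ F) (hg : g ∈ F) : f ⊓ g ∈ F :=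
  hF.2.2.2 f hf g hg

theorem zero_notMem (hF : IsConeFilter F) (hne : F ≠ {f | 0 ≤ f}) : (0 : M) ∉ F := fun h0 =>
  hne <| hF.1.antisymm fun _ hg => hF.mem_of_le h0 hg

end IsConeFilter

theorem IsAddPrime.mem_of_nsmul_mem {M : Type*} [AddMonoid M] [Preorder M] [AddLeftMono M]
    {F : Set M} (hF : IsAddPrime F) {f : M} (hf : 0 ≤ f) (n : ℕ) (h : (n + 1) • f ∈ F) :
    f ∈ F := by
  induction n with
  | zero => simpa using h
  | succ n ih =>
    rw [succ_nsmul] at h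
    exact (hF _ (nsmul_nonneg hf _) f hf h).elim ih id

theorem ContinuousMap.nonneg_iff {X β : Type*} [TopologicalSpace X] [TopologicalSpace β]
    [PartialOrder β] [Zero β] {f : C(X, β)} : 0 ≤ f ↔ ∀ z, 0 ≤ f z :=
  ContinuousMap.le_def

section PointFilter

variable {X : Type*} [TopologicalSpace X]

def pointFilter (x : X) : Set C(X, ℤ) := {f | 0 ≤ f ∧ 0 < f x}

theorem isMultPrimeFilter_pointFilter (x : X) : IsMultPrimeFilter (pointFilter x) := by
  refine ⟨⟨fun f hf => hf.1, ⟨1, ContinuousMap.nonneg_iff.mpr fun _ => zero_le_one, by simp⟩,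
    ?_, ?_⟩, ?_, ?_⟩
  · rintro f ⟨-, hfx⟩ g hg hfg
    exact ⟨hg, hfx.trans_le (hfg x)⟩
  · rintro f ⟨hf, hfx⟩ g ⟨hg, hgx⟩
    exact ⟨le_inf hf hg, lt_min hfx hgx⟩
  · intro h
    have : (0 : C(X, ℤ)) ∈ pointFilter x := h ▸ le_refl (0 : C(X, ℤ))
    exact this.2.false
  · rintro f hf g hg ⟨-, hfgx⟩
    by_cases hfx : 0 < f x
    · exact .inl ⟨hf, hfx⟩
    · exact .inr ⟨hg, by simp only [ContinuousMap.add_apply] at hfgx; omega⟩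

theorem pointFilter_injective [TotallySeparatedSpace X] :
    Function.Injective (pointFilter : X → Set C(X, ℤ)) := by
  intro x y hxy
  by_contra hne
  obtain ⟨U, hU, hxU, hyU⟩ := exists_isClopen_of_totally_separated hne
  have hχ : (LocallyConstant.charFn ℤ hU : C(X, ℤ)) ∈ pointFilter x :=
    ⟨ContinuousMap.nonneg_iff.mpr fun z => by
        simp [LocallyConstant.coe_charFn, Set.indicator_nonneg],
      by simp [LocallyConstant.coe_charFn, hxU]⟩
  rw [hxy] at hχ
  simpa [LocallyConstant.coe_charFn, Set.indicator_of_notMem hyU] using hχ.2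

/-- For `g ≥ 0` this is the indicator function of the zero set of `g`. -/
def zeroSetIndicator (g : C(X, ℤ)) : C(X, ℤ) := 1 - g ⊓ 1

theorem zeroSetIndicator_apply {g : C(X, ℤ)} (z : X) :
    zeroSetIndicator g z = 1 - min (g z) 1 := rfl

theorem zeroSetIndicator_nonneg (g : C(X, ℤ)) : 0 ≤ zeroSetIndicator g :=
  ContinuousMap.nonneg_iff.mpr fun z => by rw [zeroSetIndicator_apply]; omega

theorem one_le_add_zeroSetIndicator {g : C(X, ℤ)} (hg : 0 ≤ g) : 1 ≤ g + zeroSetIndicator g :=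
  ContinuousMap.le_def.mpr fun z => by
    have := ContinuousMap.nonneg_iff.mp hg z
    rw [ContinuousMap.add_apply, ContinuousMap.one_apply, zeroSetIndicator_apply]
    omega

theorem inf_zeroSetIndicator {g : C(X, ℤ)} (hg : 0 ≤ g) : g ⊓ zeroSetIndicator g = 0 := by
  ext z
  have := ContinuousMap.nonneg_iff.mp hg z
  rw [ContinuousMap.inf_apply, ContinuousMap.zero_apply, zeroSetIndicator_apply]
  omega

theorem zeroSetIndicator_mem_pointFilter {g : C(X, ℤ)} {x : X} (hgx : g x = 0) :
    zeroSetIndicator g ∈ pointFilter x :=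
  ⟨zeroSetIndicator_nonneg g, by simp [zeroSetIndicator_apply, hgx]⟩

theorem IsConeFilter.exists_subset_pointFilter [CompactSpace X] {F : Set C(X, ℤ)}
    (hF : IsConeFilter F) (h0 : (0 : C(X, ℤ)) ∉ F) : ∃ x, F ⊆ pointFilter x := by
  have : Nonempty F := hF.nonempty.to_subtype
  let supp (f : F) : Set X := {z | 0 < (f : C(X, ℤ)) z}
  have hclopen (f : F) : IsClopen (supp f) :=
    (isClopen_discrete (Ioi 0)).preimage (f : C(X, ℤ)).continuous
  obtain ⟨x, hx⟩ : (⋂ f, supp f).Nonempty := by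
    refine IsCompact.nonempty_iInter_of_directed_nonempty_isCompact_isClosed supp ?_ ?_
      (fun f => (hclopen f).isClosed.isCompact) (fun f => (hclopen f).isClosed)
    · rintro ⟨f, hf⟩ ⟨g, hg⟩
      exact ⟨⟨f ⊓ g, hF.inf_mem hf hg⟩, fun z (hz : 0 < min (f z) (g z)) => (lt_min_iff.mp hz).1,
        fun z (hz : 0 < min (f z) (g z)) => (lt_min_iff.mp hz).2⟩
    · rintro ⟨f, hf⟩
      by_contra hempty
      have hf0 : f = 0 := by
        ext z
        have : ¬ 0 < f z := fun hz => hempty ⟨z, hz⟩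
        have := ContinuousMap.nonneg_iff.mp (hF.nonneg hf) z
        rw [ContinuousMap.zero_apply]
        omega
      exact h0 (hf0 ▸ hf)
  exact ⟨x, fun f hf => ⟨hF.nonneg hf, mem_iInter.mp hx ⟨f, hf⟩⟩⟩

theorem IsConeFilter.one_mem [CompactSpace X] {F : Set C(X, ℤ)} (hF : IsConeFilter F)
    (hprime : IsAddPrime F) : (1 : C(X, ℤ)) ∈ F := by
  obtain ⟨f, hf⟩ := hF.nonempty
  obtain ⟨n, hn⟩ := (isCompact_range f.continuous).bddAbove
  have hone : (0 : C(X, ℤ)) ≤ 1 := ContinuousMap.nonneg_iff.mpr fun _ => zero_le_one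
  refine hprime.mem_of_nsmul_mem hone n.toNat (hF.mem_of_le hf (ContinuousMap.le_def.mpr ?_))
  intro z
  have := hn (mem_range_self z)
  rw [ContinuousMap.nsmul_apply, ContinuousMap.one_apply, nsmul_eq_mul, mul_one]
  omega

theorem IsMultPrimeFilter.exists_eq_pointFilter [CompactSpace X] {F : Set C(X, ℤ)}
    (hF : IsMultPrimeFilter F) : ∃ x, F = pointFilter x := by
  obtain ⟨hfilter, hproper, hprime⟩ : IsConeFilter F ∧ _ ∧ IsAddPrime F := hF
  obtain ⟨x, hx⟩ := hfilter.exists_subset_pointFilter (hfilter.zero_notMem hproper)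
  refine ⟨x, hx.antisymm fun g ⟨hg, hgx⟩ => ?_⟩
  have hsum : g + zeroSetIndicator g ∈ F :=
    hfilter.mem_of_le (hfilter.one_mem hprime) (one_le_add_zeroSetIndicator hg)
  refine (hprime g hg _ (zeroSetIndicator_nonneg g) hsum).resolve_right fun hχ => ?_
  have := (hx hχ).2
  rw [zeroSetIndicator_apply] at this
  omega

theorem pointFilter_eq_of_subset {x : X} {G : Set C(X, ℤ)} (hG : IsConeFilter G)
    (hproper : G ≠ {f | 0 ≤ f}) (hxG : pointFilter x ⊆ G) : pointFilter x = G := by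
  refine hxG.antisymm fun g hg => ⟨hG.nonneg hg, ?_⟩
  by_contra hgx
  have hgx : g x = 0 := by have := ContinuousMap.nonneg_iff.mp (hG.nonneg hg) x; omega
  have := hG.inf_mem hg (hxG (zeroSetIndicator_mem_pointFilter hgx))
  exact hG.zero_notMem hproper (inf_zeroSetIndicator (hG.nonneg hg) ▸ this)

end PointFilter

/-- Let `X` be a Boolean space and `P` the positive cone of `C(X, ℤ)`.  The map
`x ↦ F_x = {f ∈ P | f x > 0}` is a bijection from `X` onto the set of multiplication prime
filters of `P`; moreover every multiplication prime filter is maximal among proper filters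
of `P`. -/
theorem stmt15 {X : Type*} [TopologicalSpace X] [CompactSpace X] [T2Space X]
    [TotallyDisconnectedSpace X] :
    let P : Set C(X, ℤ) := {f | 0 ≤ f}
    let IsPFilter : Set C(X, ℤ) → Prop := fun F =>
      F ⊆ P ∧ F.Nonempty ∧ (∀ f ∈ F, ∀ g ∈ P, f ≤ g → g ∈ F) ∧
        (∀ f ∈ F, ∀ g ∈ F, f ⊓ g ∈ F)
    let IsMultPrime : Set C(X, ℤ) → Prop := fun F =>
      IsPFilter F ∧ F ≠ P ∧ ∀ f ∈ P, ∀ g ∈ P, f + g ∈ F → f ∈ F ∨ g ∈ F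
    Set.BijOn (fun x : X => {f : C(X, ℤ) | 0 ≤ f ∧ 0 < f x})
        Set.univ {F : Set C(X, ℤ) | IsMultPrime F} ∧
      ∀ F : Set C(X, ℤ), IsMultPrime F →
        ∀ G : Set C(X, ℤ), IsPFilter G → G ≠ P → F ⊆ G → F = G := by
  intro P IsPFilter IsMultPrime
  have : TotallySeparatedSpace X := loc_compact_t2_tot_disc_iff_tot_sep.mp inferInstance
  refine ⟨⟨fun x _ => isMultPrimeFilter_pointFilter x, pointFilter_injective.injOn,
    fun F hF => ?_⟩, fun F hF G hG hGP hFG => ?_⟩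
  · obtain ⟨x, rfl⟩ := IsMultPrimeFilter.exists_eq_pointFilter hF
    exact ⟨x, trivial, rfl⟩
  · obtain ⟨x, rfl⟩ := IsMultPrimeFilter.exists_eq_pointFilter hF
    exact pointFilter_eq_of_subset hG hGP hFG
end

section
/- Let X be a Boolean space and f ∈ C(X,ℤ) with 0 < f (i.e., f ≥ 0 pointwise and f ≠ 0). If there is no g ∈ C(X,ℤ) with 0 < g < f, then there exists an isolated point y ∈ X (i.e., {y} is open in X) such that f(y) = 1 and f(x) = 0 for all x ≠ y. -/
/-!
If `0 ⋖ f` in `C(X, ℤ)`, then for every `g ≥ 0` the element `f ⊓ g` lies between `0` and `f`,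
so it is `0` or `f`. Taking `g = 1` forces `f ≤ 1`; taking `g` the characteristic function of a
clopen set `U` meeting the support of `f` forces the support into `U`. Since clopen sets separate
points of a Boolean space, the support of `f` is a single point `y`, and `{y} = f ⁻¹' {1}` is open.
-/

theorem CovBy.inf_eq_or_le {α : Type*} [Lattice α] {a b c : α} (h : a ⋖ b) (hc : a ≤ c) :
    b ⊓ c = a ∨ b ≤ c :=
  (h.eq_or_eq (le_inf h.le hc) inf_le_left).imp_right inf_eq_left.mp

namespace ContinuousMap

variable {X : Type*} [TopologicalSpace X] {f : C(X, ℤ)}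

theorem le_one_of_zero_covBy (hf : 0 ⋖ f) : f ≤ 1 := by
  obtain ⟨y, hy⟩ : ∃ y, f y ≠ 0 := DFunLike.ne_iff.mp hf.lt.ne'
  refine (hf.inf_eq_or_le fun _ => zero_le_one).resolve_left fun h => hy ?_
  have hfy : min (f y) 1 = 0 := by simpa using DFunLike.congr_fun h y
  have : 0 ≤ f y := hf.le y
  omega

theorem support_subset_of_zero_covBy {U : Set X} (hf : 0 ⋖ f) (hU : IsClopen U) {x : X}
    (hx : x ∈ U) (hfx : f x ≠ 0) : Function.support f ⊆ U := by
  have hχ : 0 ≤ (LocallyConstant.charFn ℤ hU).toContinuousMap := fun z => by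
    by_cases hz : z ∈ U <;> simp [LocallyConstant.coe_charFn, hz]
  rcases hf.inf_eq_or_le hχ with h | h
  · have hmin : min (f x) 1 = 0 := by
      simpa [LocallyConstant.coe_charFn, hx] using DFunLike.congr_fun h x
    have : 0 ≤ f x := hf.le x
    omega
  · intro z hz
    by_contra hzU
    have hle : f z ≤ 0 := by simpa [LocallyConstant.coe_charFn, hzU] using h z
    have : 0 ≤ f z := hf.le z
    exact hz (by omega)

end ContinuousMap

/-- Let `X` be a Boolean space and `f ∈ C(X, ℤ)` with `0 < f`.  If there is no
`g ∈ C(X, ℤ)` with `0 < g < f`, then there is an isolated point `y ∈ X` with `f y = 1` and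
`f x = 0` for all `x ≠ y`. -/
theorem stmt17 {X : Type*} [TopologicalSpace X] [CompactSpace X] [T2Space X]
    [TotallyDisconnectedSpace X] (f : C(X, ℤ)) (hf : 0 < f)
    (hsimple : ¬ ∃ g : C(X, ℤ), 0 < g ∧ g < f) :
    ∃ y : X, IsOpen ({y} : Set X) ∧ f y = 1 ∧ ∀ x : X, x ≠ y → f x = 0 := by
  have hcov : 0 ⋖ f := ⟨hf, fun g hg hgf => hsimple ⟨g, hg, hgf⟩⟩
  obtain ⟨y, hy⟩ : ∃ y, f y ≠ 0 := DFunLike.ne_iff.mp hf.ne'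
  have hsupp : Function.support f ⊆ {y} := fun z hz => by_contra fun hzy => by
    obtain ⟨U, hU, hzU, hyU⟩ := exists_isClopen_of_totally_separated hzy
    exact hyU (ContinuousMap.support_subset_of_zero_covBy hcov hU hzU hz hy)
  have hfy : f y = 1 := by
    have : 0 ≤ f y := hf.le y
    have : f y ≤ 1 := ContinuousMap.le_one_of_zero_covBy hcov y
    omega
  refine ⟨y, ?_, hfy, fun x hx => by_contra fun hfx => hx (hsupp hfx)⟩
  have hy_eq : ({y} : Set X) = f ⁻¹' {1} := by
    ext x
    exact ⟨fun hx => by simp_all, fun hx => hsupp (by simp_all)⟩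
  exact hy_eq ▸ f.continuous.isOpen_preimage _ (isOpen_discrete _)
end

section
/- Let X be a Boolean space and f ∈ C(X,ℤ). Then f(x) = 0 for every non-isolated point x of X if and only if f belongs to the subgroup of C(X,ℤ) generated by the characteristic functions χ_{{y}} of singletons {y} with y an isolated point of X (where χ_{{y}}(y) = 1 and χ_{{y}}(x) = 0 for x ≠ y). -/
/-!
A function vanishing off the isolated points has clopen support made of isolated points; by
compactness that support is finite, so the function is the finite sum `∑ f y • χ_{y}`.
Conversely each generator vanishes at every non-isolated point, and so does every element of
the subgroup they generate.
-/

namespace ContinuousMap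

variable {X : Type*} [TopologicalSpace X]

noncomputable def singletonIndicator [T1Space X] {y : X} (hy : IsOpen ({y} : Set X)) :
    C(X, ℤ) :=
  (LocallyConstant.charFn ℤ (⟨isClosed_singleton, hy⟩ : IsClopen {y})).toContinuousMap

open Classical in
theorem singletonIndicator_apply [T1Space X] {y : X} (hy : IsOpen ({y} : Set X)) (x : X) :
    singletonIndicator hy x = if x = y then 1 else 0 := by
  change ({y} : Set X).indicator 1 x = _
  simp [Set.indicator_apply]

theorem isCompact_support [CompactSpace X] (f : C(X, ℤ)) : IsCompact (Function.support f) :=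
  ((isClosed_discrete _).preimage f.continuous : IsClosed (f ⁻¹' {0}ᶜ)).isCompact

theorem finite_support_of_isOpen_singleton [CompactSpace X] (f : C(X, ℤ))
    (h : ∀ x, f x ≠ 0 → IsOpen ({x} : Set X)) : (Function.support f).Finite :=
  f.isCompact_support.finite <| isDiscrete_iff_forall_mem_exists_isOpen.2 fun y hy =>
    ⟨{y}, h y hy, Set.singleton_inter_of_mem hy⟩

theorem eq_sum_smul_singletonIndicator [T1Space X] (f : C(X, ℤ)) {T : Finset X}
    (hT : ∀ x, x ∈ T ↔ f x ≠ 0) (hiso : ∀ y ∈ T, IsOpen ({y} : Set X)) :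
    f = ∑ y : T, f y • singletonIndicator (hiso y y.2) := by
  classical
  ext x
  simp only [sum_apply, smul_apply, singletonIndicator_apply, smul_eq_mul, mul_ite, mul_one,
    mul_zero]
  rw [Finset.sum_coe_sort T (fun y => if x = y then f y else 0), Finset.sum_ite_eq]
  split_ifs with hx
  · rfl
  · exact not_not.1 (mt (hT x).2 hx)

end ContinuousMap

open ContinuousMap

theorem stmt18_general {X : Type*} [TopologicalSpace X] [CompactSpace X] [T2Space X]
    (f : C(X, ℤ)) :
    (∀ x : X, ¬ IsOpen ({x} : Set X) → f x = 0) ↔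
      f ∈ AddSubgroup.closure
        {g : C(X, ℤ) | ∃ y : X, IsOpen ({y} : Set X) ∧ g y = 1 ∧
          ∀ x : X, x ≠ y → g x = 0} := by
  constructor
  · intro h
    have hsupp : ∀ x, f x ≠ 0 → IsOpen ({x} : Set X) := fun x hx => not_not.1 (mt (h x) hx)
    set T := (finite_support_of_isOpen_singleton f hsupp).toFinset
    have hT : ∀ x, x ∈ T ↔ f x ≠ 0 := fun x => Set.Finite.mem_toFinset _
    have hiso : ∀ y ∈ T, IsOpen ({y} : Set X) := fun y hy => hsupp y ((hT y).1 hy)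
    rw [eq_sum_smul_singletonIndicator f hT hiso]
    refine AddSubgroup.sum_mem _ fun y _ =>
      AddSubgroup.zsmul_mem _ (AddSubgroup.subset_closure ?_) _
    exact ⟨y, hiso y y.2, by simp [singletonIndicator_apply],
      fun x hx => by simp [singletonIndicator_apply, hx]⟩
  · intro hmem x hx
    induction hmem using AddSubgroup.closure_induction with
    | mem g hg =>
      obtain ⟨y, hy, -, hg0⟩ := hg
      exact hg0 x fun hxy => hx (hxy ▸ hy)
    | zero => rfl
    | add a b _ _ ha hb => simp [ha, hb]
    | neg a _ ha => simp [ha]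

/-- Let `X` be a Boolean space and `f ∈ C(X, ℤ)`.  Then `f` vanishes at every non-isolated
point of `X` if and only if `f` lies in the subgroup of `C(X, ℤ)` generated by the
characteristic functions of singletons of isolated points. -/
theorem stmt18 {X : Type*} [TopologicalSpace X] [CompactSpace X] [T2Space X]
    [TotallyDisconnectedSpace X] (f : C(X, ℤ)) :
    (∀ x : X, ¬ IsOpen ({x} : Set X) → f x = 0) ↔
      f ∈ AddSubgroup.closure
        {g : C(X, ℤ) | ∃ y : X, IsOpen ({y} : Set X) ∧ g y = 1 ∧
          ∀ x : X, x ≠ y → g x = 0} :=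
  stmt18_general f
end

section
/- Let R be a commutative ring and a, b, α, r, s ∈ R with aα = br and b(1−α) = as. Then aR ∩ bR = aαR + b(1−α)R. Consequently, in an arithmetical ring the intersection of any two finitely generated ideals is finitely generated. -/
theorem Ideal.span_singleton_inf_span_singleton_eq {R : Type*} [CommRing R] {a b α r s : R}
    (h₁ : a * α = b * r) (h₂ : b * (1 - α) = a * s) :
    Ideal.span {a} ⊓ Ideal.span {b} = Ideal.span {a * α} + Ideal.span {b * (1 - α)} := by
  rw [Ideal.add_eq_sup]
  refine le_antisymm ?_ ?_
  · rintro x ⟨hxa, hxb⟩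
    obtain ⟨u, rfl⟩ := Ideal.mem_span_singleton'.mp hxa
    obtain ⟨v, hv⟩ := Ideal.mem_span_singleton'.mp hxb
    have hx : u * a = u * (a * α) + v * (b * (1 - α)) := by linear_combination (α - 1) * hv
    rw [hx]
    exact Ideal.add_mem _ (Ideal.mem_sup_left (Ideal.mem_span_singleton'.mpr ⟨u, rfl⟩))
      (Ideal.mem_sup_right (Ideal.mem_span_singleton'.mpr ⟨v, rfl⟩))
  · simp only [sup_le_iff, le_inf_iff, Ideal.span_singleton_le_span_singleton]
    exact ⟨⟨dvd_mul_right a α, s, h₂⟩, ⟨r, h₁⟩, dvd_mul_right _ _⟩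

theorem IsLocalization.exists_mul_mem_span_singleton_of_span_le {R S : Type*} [CommRing R]
    [CommRing S] [Algebra R S] (M : Submonoid R) [IsLocalization M S] {x y : R}
    (h : Ideal.span {algebraMap R S x} ≤ Ideal.span {algebraMap R S y}) :
    ∃ u ∈ M, u * x ∈ Ideal.span {y} := by
  refine (IsLocalization.algebraMap_mem_map_algebraMap_iff M S _ x).mp ?_
  rw [Ideal.map_span, Set.image_singleton]
  exact h (Ideal.mem_span_singleton_self _)

namespace IsArithmetical

variable {R : Type*} [CommRing R]

theorem colon_sup_colon_eq_top (hR : IsArithmetical R) (a b : R) :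
    (Ideal.span {b}).colon (Ideal.span {a}) ⊔ (Ideal.span {a}).colon (Ideal.span {b}) = ⊤ := by
  by_contra h
  obtain ⟨m, hm, hle⟩ := Ideal.exists_le_maximal _ h
  let f := algebraMap R (Localization.AtPrime m)
  rcases hR m (Ideal.span {f a}) (Ideal.span {f b}) with hab | hba
  · obtain ⟨u, hu, hua⟩ :=
      IsLocalization.exists_mul_mem_span_singleton_of_span_le m.primeCompl hab
    exact hu (hle (Ideal.mem_sup_left (Ideal.mem_colon_span_singleton.mpr hua)))
  · obtain ⟨u, hu, hub⟩ :=
      IsLocalization.exists_mul_mem_span_singleton_of_span_le m.primeCompl hba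
    exact hu (hle (Ideal.mem_sup_right (Ideal.mem_colon_span_singleton.mpr hub)))

theorem exists_mul_eq_mul_and_mul_one_sub_eq (hR : IsArithmetical R) (a b : R) :
    ∃ α r s : R, a * α = b * r ∧ b * (1 - α) = a * s := by
  have hone : (1 : R) ∈ _ := (hR.colon_sup_colon_eq_top a b).symm ▸ Submodule.mem_top
  obtain ⟨α, hα, β, hβ, hαβ⟩ := Submodule.mem_sup.mp hone
  obtain ⟨r, hr⟩ := Ideal.mem_span_singleton'.mp (Ideal.mem_colon_span_singleton.mp hα)
  obtain ⟨s, hs⟩ := Ideal.mem_span_singleton'.mp (Ideal.mem_colon_span_singleton.mp hβ)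
  exact ⟨α, r, s, by linear_combination -hr, by linear_combination -hs - b * hαβ⟩

theorem inf_sup_left (hR : IsArithmetical R) (A B C : Ideal R) :
    A ⊓ (B ⊔ C) = A ⊓ B ⊔ A ⊓ C := by
  refine le_antisymm (Ideal.le_of_localization_maximal fun m _ ↦ ?_) le_inf_sup
  simp only [IsLocalization.map_inf m.primeCompl, Ideal.map_sup]
  rcases hR m (B.map (algebraMap R (Localization.AtPrime m)))
      (C.map (algebraMap R (Localization.AtPrime m))) with h | h
  · simp [sup_eq_right.mpr h]
  · simp [sup_eq_left.mpr h]

theorem fg_span_singleton_inf (hR : IsArithmetical R) (a : R) {B : Ideal R} (hB : B.FG) :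
    (Ideal.span {a} ⊓ B).FG := by
  induction B, hB using Submodule.fg_induction with
  | singleton b =>
    obtain ⟨α, r, s, h₁, h₂⟩ := hR.exists_mul_eq_mul_and_mul_one_sub_eq a b
    rw [← Ideal.span, Ideal.span_singleton_inf_span_singleton_eq h₁ h₂]
    exact (Submodule.fg_span_singleton _).sup (Submodule.fg_span_singleton _)
  | sup B₁ B₂ _ _ h₁ h₂ =>
    rw [hR.inf_sup_left]
    exact Submodule.FG.sup h₁ h₂

theorem fg_inf (hR : IsArithmetical R) {A B : Ideal R} (hA : A.FG) (hB : B.FG) :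
    (A ⊓ B).FG := by
  induction A, hA using Submodule.fg_induction with
  | singleton a => exact hR.fg_span_singleton_inf a hB
  | sup A₁ A₂ _ _ h₁ h₂ =>
    rw [inf_comm, hR.inf_sup_left, inf_comm B, inf_comm B]
    exact Submodule.FG.sup h₁ h₂

end IsArithmetical

/-- Let `R` be a commutative ring and `a, b, α, r, s ∈ R` with `a·α = b·r` and
`b·(1 − α) = a·s`.  Then `aR ∩ bR = a·α·R + b·(1 − α)·R`.  Consequently, in an arithmetical
ring the intersection of any two finitely generated ideals is finitely generated. -/
theorem stmt19 {R : Type*} [CommRing R] :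
    (∀ a b α r s : R, a * α = b * r → b * (1 - α) = a * s →
      Ideal.span {a} ⊓ Ideal.span {b} =
        Ideal.span {a * α} + Ideal.span {b * (1 - α)}) ∧
    (IsArithmetical R → ∀ A B : Ideal R, A.FG → B.FG → (A ⊓ B).FG) :=
  ⟨fun _ _ _ _ _ ↦ Ideal.span_singleton_inf_span_singleton_eq,
    fun hR _ _ ↦ hR.fg_inf⟩
end
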